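/- For any bounded measurable f : X → ℝ and g(x,s,y) := 1{s=0}f(x) + 1{s=1}f(y), the action of the occlusion kernel reduces to the action of K on the averaged function: K_occ g(x,s,y) = K f_α(x) for all (x,s,y), where f_α(x) := (1 − α(ρ(x)))f(x) + α(ρ(x))→Pf(x). Consequently K_occ^t g(x,s,y) = K^t f_α(x) for all t ≥ 1, and P_occ(g) = P(f_α). -/

import Mathlib

open MeasureTheory ProbabilityTheory Filter

noncomputable section

namespace OcclusionPaper

variable {X : Type*} [MeasurableSpace X]

/-- The mean `μ_i = P_i(f)` of `f` under `P_i`, i.e. `P` conditioned to the region `A i`. -/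
def regionMean (P : Measure X) {R : ℕ} (A : Fin R → Set X) (f : X → ℝ) (i : Fin R) : ℝ :=
  ∫ x, f x ∂(P[|A i])

/-- The resolution `→Pf(x) = ∑ i, μ_i 1{x ∈ A i}`. -/
def res (P : Measure X) {R : ℕ} (A : Fin R → Set X) (f : X → ℝ) : X → ℝ :=
  fun x => ∑ i, Set.indicator (A i) (fun _ => regionMean P A f i) x

/-- The orthogonal counterpart `←Pf = f − →Pf`. -/
def orth (P : Measure X) {R : ℕ} (A : Fin R → Set X) (f : X → ℝ) : X → ℝ :=
  fun x => f x - res P A f x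

/-- Covariance of `g` and `h` under `P`. -/
def covP {Y : Type*} [MeasurableSpace Y] (P : Measure Y) (g h : Y → ℝ) : ℝ :=
  (∫ y, g y * h y ∂P) - (∫ y, g y ∂P) * (∫ y, h y ∂P)

/-- Action of the `k`-th iterate of a (measure-valued) transition kernel on a function:
`K^k g`. -/
def kerIter {Y : Type*} [MeasurableSpace Y] (κ : Y → Measure Y) : ℕ → (Y → ℝ) → Y → ℝ
  | 0, g => g
  | (k + 1), g => fun y => ∫ z, kerIter κ k g z ∂(κ y)

/-- The joint law of the first `n` steps `(X_1, …, X_n)` of a Markov chain with initial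
distribution `μ` and transition kernel `κ`. -/
def chainLawF {Y : Type*} [MeasurableSpace Y] (μ : Measure Y) (κ : Y → Measure Y) :
    (n : ℕ) → Measure (Fin n → Y)
  | 0 => Measure.dirac (fun i : Fin 0 => i.elim0)
  | 1 => μ.map (fun x _ => x)
  | (n + 2) => (chainLawF μ κ (n + 1)).bind
      (fun xs => (κ (xs (Fin.last n))).map (fun z => Fin.snoc xs z))

/-- The distribution `μ K^t` of a Markov chain with kernel `κ` after `t` steps from `μ`. -/
def evolveF {Y : Type*} [MeasurableSpace Y] (κ : Y → Measure Y) (μ : Measure Y) : ℕ → Measure Y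
  | 0 => μ
  | (t + 1) => (evolveF κ μ t).bind κ

/-- `N_i`: the number of times the finite trajectory `xs` visits region `A i`. -/
def Nreg {R n : ℕ} (A : Fin R → Set X) (xs : Fin n → X) (i : Fin R) : ℕ :=
  ∑ t : Fin n, Set.indicator (A i) (fun _ => (1 : ℕ)) (xs t)

/-- The fully occluded (ideal) estimator
`μ̂_ideal = n⁻¹ ∑_{i=1}^R ∑_{j=1}^{N_i} f(Y_{ij})`, evaluated on an outcome consisting of the
chain trajectory together with, for each region, an array of draws from `P_i`. -/
def idealEst {R n : ℕ} (A : Fin R → Set X) (f : X → ℝ)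
    (ω : (Fin n → X) × (Fin R → Fin n → X)) : ℝ :=
  (n : ℝ)⁻¹ * ∑ i : Fin R, ∑ j : Fin n, if (j : ℕ) < Nreg A ω.1 i then f (ω.2 i j) else 0

/-- The joint law of the chain `(X_1,…,X_n)` together with, for each region `i`, an i.i.d.
array `(Y_{ij})_j` of draws from `P_i`, independent of the chain (hence in particular
conditionally independent of it given the visited regions). -/
def jointLaw (P : Measure X) {R : ℕ} (A : Fin R → Set X) (κ : X → Measure X) (n : ℕ) :
    Measure ((Fin n → X) × (Fin R → Fin n → X)) :=
  (chainLawF P κ n).prod (Measure.pi fun i => Measure.pi fun _ : Fin n => P[|A i])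

/-- Bernoulli distribution on `Bool` with success probability `p` (`true` has mass `p`). -/
def bern (p : ℝ) : Measure Bool :=
  ENNReal.ofReal p • Measure.dirac true + ENNReal.ofReal (1 - p) • Measure.dirac false

/-- The conditional law of the pair `(s, y)` given the current chain position `x`:
`s ~ Bernoulli(α(ρ x))` and `y ~ P_{ρ x}` independently. -/
def mark (P : Measure X) {R : ℕ} (A : Fin R → Set X) (ρ : X → Fin R) (α : Fin R → ℝ) (x : X) :
    Measure (Bool × X) :=
  (bern (α (ρ x))).prod (P[|A (ρ x)])

/-- The occlusion kernel `K_occ((x,s,y) → (dx',s',dy'))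
 = K(x → dx')·(α(ρ x')1{s'=1} + (1−α(ρ x'))1{s'=0})·P_{ρ x'}(dy')`. -/
def Kocc (P : Measure X) {R : ℕ} (A : Fin R → Set X) (ρ : X → Fin R) (α : Fin R → ℝ)
    (κ : X → Measure X) : X × Bool × X → Measure (X × Bool × X) :=
  fun z => (κ z.1).bind fun x' => (mark P A ρ α x').map fun sy => (x', sy.1, sy.2)

/-- The measure `P_occ(dx,s,dy) = P(dx)·(α(ρ x)1{s=1} + (1−α(ρ x))1{s=0})·P_{ρ x}(dy)`. -/
def Pocc (P : Measure X) {R : ℕ} (A : Fin R → Set X) (ρ : X → Fin R) (α : Fin R → ℝ) :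
    Measure (X × Bool × X) :=
  P.bind fun x => (mark P A ρ α x).map fun sy => (x, sy.1, sy.2)

/-- `f_occ(x,s,y) = 1{s=0} f(x) + 1{s=1} f(y)`. -/
def focc (f : X → ℝ) : X × Bool × X → ℝ :=
  fun z => if z.2.1 then f z.2.2 else f z.1

/-- `f_α(x) = (1 − α(ρ x)) f(x) + α(ρ x) →Pf(x)`. -/
def falpha (P : Measure X) {R : ℕ} (A : Fin R → Set X) (ρ : X → Fin R) (α : Fin R → ℝ)
    (f : X → ℝ) : X → ℝ :=
  fun x => (1 - α (ρ x)) * f x + α (ρ x) * res P A f x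

/-- `f_a(x) = (1 − α(ρ x)) f(x)`. -/
def fa {R : ℕ} (ρ : X → Fin R) (α : Fin R → ℝ) (f : X → ℝ) : X → ℝ :=
  fun x => (1 - α (ρ x)) * f x

end OcclusionPaper

namespace OcclusionPaper

/-! The occlusion kernel is `K` followed by the kernel `x ↦ δ_x ⊗ Bernoulli(α(ρ x)) ⊗ P_{ρ x}`
that attaches the marks `(s, y)` to the new position. Integrating `g` against this mark kernel
averages the marks out and leaves `f_α(x)`; this gives `K_occ g = K f_α`, and, with `P` in place
of `K(z.1, ·)`, `P_occ(g) = P(f_α)`. The marks do not influence the next move, so the first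
marginal of `K_occ(z, ·)` is `K(z.1, ·)` and functions of the position alone are transported by
`K_occ` exactly as by `K`. Hence `K_occ^(t+1) g = K_occ^t ((K f_α) ∘ fst) = (K^(t+1) f_α) ∘ fst`. -/

section KernelIterates

variable {Y : Type*} [MeasurableSpace Y]

lemma kerIter_succ' (κ : Y → Measure Y) (g : Y → ℝ) (t : ℕ) :
    kerIter κ (t + 1) g = kerIter κ t (kerIter κ 1 g) := by
  induction t with
  | zero => rfl
  | succ t ih => rw [kerIter, ih]; rfl

lemma stronglyMeasurable_kerIter (κ : Kernel Y Y) [IsSFiniteKernel κ] {g : Y → ℝ}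
    (hg : StronglyMeasurable g) (t : ℕ) : StronglyMeasurable (kerIter κ t g) := by
  induction t with
  | zero => exact hg
  | succ t ih => exact (ih.comp_measurable measurable_snd).integral_kernel_prod_right' (κ := κ)

lemma kerIter_comp_of_map_eq {Y' : Type*} [MeasurableSpace Y'] (κ' : Y' → Measure Y')
    (κ : Kernel Y Y) [IsSFiniteKernel κ] {π : Y' → Y} (hπ : Measurable π)
    (hmap : ∀ y, (κ' y).map π = κ (π y)) {g : Y → ℝ} (hg : StronglyMeasurable g) (t : ℕ) :
    kerIter κ' t (g ∘ π) = kerIter κ t g ∘ π := by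
  induction t with
  | zero => rfl
  | succ t ih =>
    funext y
    have hmeas : AEStronglyMeasurable (kerIter κ t g) ((κ' y).map π) := by
      rw [hmap]
      exact (stronglyMeasurable_kerIter κ hg t).aestronglyMeasurable
    simp only [kerIter, ih, Function.comp_apply]
    rw [← integral_map hπ.aemeasurable hmeas, hmap]

end KernelIterates

lemma integral_bind_kernel_of_bounded {Y Z : Type*} [MeasurableSpace Y] [MeasurableSpace Z]
    (μ : Measure Y) [IsFiniteMeasure μ] (η : Kernel Y Z) [IsFiniteKernel η] {g : Z → ℝ}
    (hg : StronglyMeasurable g) {C : ℝ} (hC : ∀ z, |g z| ≤ C) :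
    ∫ z, g z ∂(μ.bind η) = ∫ y, ∫ z, g z ∂(η y) ∂μ := by
  rw [Measure.comp_eq_comp_const_apply, Kernel.integral_comp]
  · rfl
  · exact .of_bound hg.aestronglyMeasurable C (ae_of_all _ hC)

lemma isProbabilityMeasure_bern {p : ℝ} (h0 : 0 ≤ p) (h1 : p ≤ 1) :
    IsProbabilityMeasure (bern p) := by
  constructor
  simp [bern, ← ENNReal.ofReal_add h0 (sub_nonneg.2 h1)]

lemma integral_bern {p : ℝ} (h0 : 0 ≤ p) (h1 : p ≤ 1) (G : Bool → ℝ) :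
    ∫ b, G b ∂(bern p) = p * G true + (1 - p) * G false := by
  have hint (b : Bool) (c : ℝ) : Integrable G (ENNReal.ofReal c • Measure.dirac b) :=
    Integrable.of_finite.smul_measure ENNReal.ofReal_ne_top
  rw [bern, integral_add_measure (hint _ _) (hint _ _), integral_smul_measure,
    integral_smul_measure, integral_dirac, integral_dirac, ENNReal.toReal_ofReal h0,
    ENNReal.toReal_ofReal (sub_nonneg.2 h1), smul_eq_mul, smul_eq_mul]

section Occlusion

variable {X : Type*}

lemma abs_focc_le {f : X → ℝ} {C : ℝ} (hC : ∀ x, |f x| ≤ C) (z : X × Bool × X) :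
    |focc f z| ≤ C := by
  unfold focc
  split <;> apply hC

variable [MeasurableSpace X]

lemma measurable_focc {f : X → ℝ} (hf : Measurable f) : Measurable (focc f) :=
  Measurable.ite (measurableSet_eq_fun measurable_snd.fst measurable_const)
    (hf.comp measurable_snd.snd) (hf.comp measurable_fst)

variable (P : Measure X) {R : ℕ} (A : Fin R → Set X) (ρ : X → Fin R) (α : Fin R → ℝ)

lemma res_eq_regionMean_comp (f : X → ℝ) (hdisj : Pairwise fun i j => Disjoint (A i) (A j))
    (hρ : ∀ x, x ∈ A (ρ x)) : res P A f = regionMean P A f ∘ ρ := by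
  funext x
  refine (Finset.sum_eq_single (ρ x) (fun i _ hi => ?_) (by simp)).trans ?_
  · exact Set.indicator_of_notMem (fun hx => (hdisj hi).le_bot ⟨hx, hρ x⟩) _
  · exact Set.indicator_of_mem (hρ x) _

lemma measurable_falpha {f : X → ℝ} (hdisj : Pairwise fun i j => Disjoint (A i) (A j))
    (hρm : Measurable ρ) (hρ : ∀ x, x ∈ A (ρ x)) (hfm : Measurable f) :
    Measurable (falpha P A ρ α f) := by
  have hαρ : Measurable (α ∘ ρ) := (measurable_of_countable α).comp hρm
  have hres : Measurable (res P A f) := by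
    rw [res_eq_regionMean_comp P A ρ f hdisj hρ]
    exact (measurable_of_countable _).comp hρm
  exact ((measurable_const.sub hαρ).mul hfm).add (hαρ.mul hres)

lemma measurable_map_mark_prodMk (hρm : Measurable ρ) :
    Measurable fun x => (mark P A ρ α x).map fun sy => (x, sy.1, sy.2) := by
  refine Measure.measurable_of_measurable_coe _ fun s hs => ?_
  have hjoint : Measurable fun xi : X × Fin R =>
      (bern (α xi.2)).prod (P[|A xi.2]) (Prod.mk xi.1 ⁻¹' s) :=
    measurable_from_prod_countable_left fun i =>
      (measurable_measure_prodMk_left hs :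
        Measurable fun x => (bern (α i)).prod (P[|A i]) (Prod.mk x ⁻¹' s))
  have happly : ∀ x, ((mark P A ρ α x).map fun sy => (x, sy.1, sy.2)) s
      = (bern (α (ρ x))).prod (P[|A (ρ x)]) (Prod.mk x ⁻¹' s) := fun x => by
    rw [Measure.map_apply measurable_prodMk_left hs]
    rfl
  have hcomp := hjoint.comp (measurable_id.prodMk hρm)
  rw [funext happly]
  exact hcomp

def occMark (hρm : Measurable ρ) : Kernel X (X × Bool × X) where
  toFun x := (mark P A ρ α x).map fun sy => (x, sy.1, sy.2)
  measurable' := measurable_map_mark_prodMk P A ρ α hρm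

variable (hρm : Measurable ρ)

lemma Kocc_apply (K : Kernel X X) (z : X × Bool × X) :
    Kocc P A ρ α (fun x => K x) z = (K z.1).bind (occMark P A ρ α hρm) := rfl

lemma Pocc_eq_bind : Pocc P A ρ α = P.bind (occMark P A ρ α hρm) := rfl

variable (hpos : ∀ i, 0 < P (A i)) (hα0 : ∀ i, 0 ≤ α i) (hα1 : ∀ i, α i ≤ 1)
include hpos hα0 hα1

lemma isProbabilityMeasure_mark [IsFiniteMeasure P] (x : X) :
    IsProbabilityMeasure (mark P A ρ α x) :=
  have := isProbabilityMeasure_bern (hα0 (ρ x)) (hα1 (ρ x))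
  have := cond_isProbabilityMeasure (μ := P) (hpos (ρ x)).ne'
  inferInstanceAs (IsProbabilityMeasure ((bern _).prod _))

lemma isMarkovKernel_occMark [IsFiniteMeasure P] : IsMarkovKernel (occMark P A ρ α hρm) := by
  refine ⟨fun x => ?_⟩
  have := isProbabilityMeasure_mark P A ρ α hpos hα0 hα1 x
  exact Measure.isProbabilityMeasure_map (by fun_prop)

lemma map_fst_occMark [IsFiniteMeasure P] :
    (occMark P A ρ α hρm).map Prod.fst = Kernel.id := by
  ext x : 1
  have := isProbabilityMeasure_mark P A ρ α hpos hα0 hα1 x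
  rw [Kernel.map_apply _ measurable_fst, Kernel.id_apply, occMark, Kernel.coe_mk,
    Measure.map_map measurable_fst (by fun_prop)]
  exact (Measure.map_const _ x).trans (by simp)

include hρm in
lemma map_fst_Kocc [IsFiniteMeasure P] (K : Kernel X X) (z : X × Bool × X) :
    (Kocc P A ρ α (fun x => K x) z).map Prod.fst = K z.1 := by
  rw [Kocc_apply P A ρ α hρm, ← Kernel.comp_apply, ← Kernel.map_apply _ measurable_fst,
    Kernel.map_comp, map_fst_occMark P A ρ α hρm hpos hα0 hα1, Kernel.id_comp]

variable {f : X → ℝ} (hdisj : Pairwise fun i j => Disjoint (A i) (A j))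
  (hρ : ∀ x, x ∈ A (ρ x)) (hfm : Measurable f) {C : ℝ} (hC : ∀ x, |f x| ≤ C)
include hdisj hρ hfm hC

lemma integral_focc_occMark [IsFiniteMeasure P] (x : X) :
    ∫ w, focc f w ∂(occMark P A ρ α hρm x) = falpha P A ρ α f x := by
  have := cond_isProbabilityMeasure (μ := P) (hpos (ρ x)).ne'
  have := isProbabilityMeasure_mark P A ρ α hpos hα0 hα1 x
  have hint : Integrable (fun sy : Bool × X => focc f (x, sy.1, sy.2)) (mark P A ρ α x) :=
    .of_bound ((measurable_focc hfm).comp (by fun_prop)).aestronglyMeasurable C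
      (ae_of_all _ fun sy => abs_focc_le hC _)
  rw [occMark, Kernel.coe_mk, integral_map (by fun_prop)
    (measurable_focc hfm).aestronglyMeasurable, mark, integral_prod _ hint,
    integral_bern (hα0 (ρ x)) (hα1 (ρ x))]
  simp only [focc, Bool.false_eq_true, if_true, if_false, integral_const, probReal_univ,
    one_smul]
  rw [falpha, res_eq_regionMean_comp P A ρ f hdisj hρ, Function.comp_apply, regionMean]
  ring

lemma integral_focc_bind_occMark [IsFiniteMeasure P] (μ : Measure X) [IsFiniteMeasure μ] :
    ∫ w, focc f w ∂(μ.bind (occMark P A ρ α hρm)) = ∫ x, falpha P A ρ α f x ∂μ := by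
  have := isMarkovKernel_occMark P A ρ α hρm hpos hα0 hα1
  rw [integral_bind_kernel_of_bounded _ _ (measurable_focc hfm).stronglyMeasurable
    (abs_focc_le hC)]
  simp_rw [integral_focc_occMark P A ρ α hρm hpos hα0 hα1 hdisj hρ hfm hC]

end Occlusion

theorem Kocc_action_eq_K_falpha_general
    {X : Type*} [MeasurableSpace X]
    (P : Measure X) [IsProbabilityMeasure P] {R : ℕ} (A : Fin R → Set X)
    (hdisj : Pairwise fun i j => Disjoint (A i) (A j))
    (hpos : ∀ i, 0 < P (A i))
    (ρ : X → Fin R) (hρm : Measurable ρ) (hρ : ∀ x, x ∈ A (ρ x))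
    (α : Fin R → ℝ) (hα0 : ∀ i, 0 ≤ α i) (hα1 : ∀ i, α i ≤ 1)
    (K : Kernel X X) [IsMarkovKernel K]
    (f : X → ℝ) (hfm : Measurable f) (hbd : ∃ C, ∀ x, |f x| ≤ C) :
    (∀ z : X × Bool × X,
      (∫ w, focc f w ∂(Kocc P A ρ α (fun x => K x) z))
        = ∫ x', falpha P A ρ α f x' ∂(K z.1)) ∧
    (∀ t, 1 ≤ t → ∀ z : X × Bool × X,
      kerIter (Kocc P A ρ α (fun x => K x)) t (focc f) z
        = kerIter (fun x => K x) t (falpha P A ρ α f) z.1) ∧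
    (∫ z, focc f z ∂(Pocc P A ρ α)) = ∫ x, falpha P A ρ α f x ∂P := by
  obtain ⟨C, hC⟩ := hbd
  have hbind := integral_focc_bind_occMark P A ρ α hρm hpos hα0 hα1 hdisj hρ hfm hC
  have hstep : ∀ z : X × Bool × X, ∫ w, focc f w ∂(Kocc P A ρ α (fun x => K x) z)
      = ∫ x', falpha P A ρ α f x' ∂(K z.1) := fun z => by
    rw [Kocc_apply P A ρ α hρm, hbind]
  refine ⟨hstep, fun t ht z => ?_, by rw [Pocc_eq_bind P A ρ α hρm, hbind]⟩
  obtain ⟨t, rfl⟩ := Nat.exists_eq_add_of_le' ht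
  have hone : kerIter (Kocc P A ρ α (fun x => K x)) 1 (focc f)
      = kerIter (fun x => K x) 1 (falpha P A ρ α f) ∘ Prod.fst := funext hstep
  have hKfalpha := stronglyMeasurable_kerIter K
    (measurable_falpha P A ρ α hdisj hρm hρ hfm).stronglyMeasurable 1
  rw [kerIter_succ', hone, kerIter_comp_of_map_eq _ K measurable_fst
    (map_fst_Kocc P A ρ α hρm hpos hα0 hα1 K) hKfalpha, kerIter_succ' _ _ t]
  rfl

/-- For `g(x,s,y) = 1{s=0}f(x) + 1{s=1}f(y)` the action of the occlusion
kernel reduces to the action of `K` on `f_α`: `K_occ g = K f_α`, hence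
`K_occ^t g = K^t f_α` for all `t ≥ 1`, and `P_occ(g) = P(f_α)`. -/
theorem Kocc_action_eq_K_falpha
    {X : Type*} [MeasurableSpace X]
    (P : Measure X) [IsProbabilityMeasure P] {R : ℕ} (A : Fin R → Set X)
    (hA : ∀ i, MeasurableSet (A i))
    (hdisj : Pairwise fun i j => Disjoint (A i) (A j))
    (hcover : (⋃ i, A i) = Set.univ)
    (hpos : ∀ i, 0 < P (A i))
    (ρ : X → Fin R) (hρm : Measurable ρ) (hρ : ∀ x, x ∈ A (ρ x))
    (α : Fin R → ℝ) (hα0 : ∀ i, 0 ≤ α i) (hα1 : ∀ i, α i ≤ 1)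
    (K : Kernel X X) [IsMarkovKernel K] (hK : K.Invariant P)
    (f : X → ℝ) (hfm : Measurable f) (hbd : ∃ C, ∀ x, |f x| ≤ C) :
    (∀ z : X × Bool × X,
      (∫ w, focc f w ∂(Kocc P A ρ α (fun x => K x) z))
        = ∫ x', falpha P A ρ α f x' ∂(K z.1)) ∧
    (∀ t, 1 ≤ t → ∀ z : X × Bool × X,
      kerIter (Kocc P A ρ α (fun x => K x)) t (focc f) z
        = kerIter (fun x => K x) t (falpha P A ρ α f) z.1) ∧
    (∫ z, focc f z ∂(Pocc P A ρ α)) = ∫ x, falpha P A ρ α f x ∂P :=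
  Kocc_action_eq_K_falpha_general P A hdisj hpos ρ hρm hρ α hα0 hα1 K f hfm hbd

end OcclusionPaper
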